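/- If B₁ and B₂ are subspaces of V that are both strong in V, then B₁ ∩ B₂ is strong in V. -/

import Mathlib

/-!
Common notions: for a subspace `A` of an ambient `K`-vector space `M`, `wedge2 K A` is the
image of the exterior square `⋀² A` inside the exterior algebra of `M` (the span of the
products `a ∧ b` for `a, b ∈ A`).  For subspaces `C`, `B`, `fdim K C B` (resp. `cdim K C B`)
is the dimension of `B` over `C`, i.e. of the quotient `B / (C ∩ B)`, as a natural number
(resp. as a cardinal), and `FinOver K C B` says that `B` is finite-dimensional over `C`.
Relative to a fixed subspace `N` of `⋀² M`, writing `N(X) := N ⊓ wedge2 K X`,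
`pdim K N C B` is the relative predimension `δ(B/C) = dim(B/C) - dim(N(B)/N(C))` and
`pdim0 K N A = δ(A) = dim A - dim N(A)`.  `Strong K N B A` says that `B` is strong
(self-sufficient) in `A`:  `δ(C/B) ≥ 0` (stated in the equivalent subtraction-free form
`dim(N(C)/N(B)) ≤ dim(C/B)`) for every intermediate subspace `C` finite-dimensional over
`B`; `MinStrong K N B A` says that `A` is a minimal strong extension of `B`.
-/

noncomputable section

universe u v

variable (K : Type u) [Field K] {M : Type v} [AddCommGroup M] [Module K M]

/-- The image of the exterior square `⋀² A` of a subspace `A` inside the exterior algebra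
of the ambient space. -/
def wedge2 (A : Submodule K M) : Submodule K (ExteriorAlgebra K M) :=
  Submodule.span K
    {z | ∃ a ∈ A, ∃ b ∈ A, z = ExteriorAlgebra.ι K a * ExteriorAlgebra.ι K b}

/-- The relative dimension `dim (B / C)`, as a natural number. -/
def fdim (C B : Submodule K M) : ℕ :=
  Module.finrank K (↥B ⧸ Submodule.comap B.subtype C)

/-- The relative dimension `dim (B / C)`, as a cardinal. -/
def cdim (C B : Submodule K M) : Cardinal :=
  Module.rank K (↥B ⧸ Submodule.comap B.subtype C)

/-- `B` is finite-dimensional over `C`. -/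
def FinOver (C B : Submodule K M) : Prop :=
  Module.Finite K (↥B ⧸ Submodule.comap B.subtype C)

/-- The relative predimension `δ(B/C) = dim(B/C) - dim(N(B)/N(C))` with respect to `N`. -/
def pdim (N : Submodule K (ExteriorAlgebra K M)) (C B : Submodule K M) : ℤ :=
  (fdim K C B : ℤ) - (fdim K (N ⊓ wedge2 K C) (N ⊓ wedge2 K B) : ℤ)

/-- The predimension `δ(A) = dim A - dim N(A)` with respect to `N`. -/
def pdim0 (N : Submodule K (ExteriorAlgebra K M)) (A : Submodule K M) : ℤ :=
  (Module.finrank K ↥A : ℤ) - (Module.finrank K ↥(N ⊓ wedge2 K A) : ℤ)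

/-- `B` is strong (self-sufficient) in `A` with respect to `N`. -/
def Strong (N : Submodule K (ExteriorAlgebra K M)) (B A : Submodule K M) : Prop :=
  B ≤ A ∧ ∀ C : Submodule K M, B ≤ C → C ≤ A → FinOver K B C →
    cdim K (N ⊓ wedge2 K B) (N ⊓ wedge2 K C) ≤ Cardinal.lift.{u} (cdim K B C)

/-- `A` is a minimal strong extension of `B` with respect to `N`. -/
def MinStrong (N : Submodule K (ExteriorAlgebra K M)) (B A : Submodule K M) : Prop :=
  Strong K N B A ∧ B < A ∧ ∀ C : Submodule K M, B < C → C < A → ¬ Strong K N C A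

/-!
The heart of the matter is `⋀²X ∩ ⋀²Y = ⋀²(X ∩ Y)`: a linear retraction of the ambient space
onto `X` mapping `Y` into `X ∩ Y` induces an endomorphism of the exterior algebra fixing `⋀²X`
and sending `⋀²Y` into `⋀²(X ∩ Y)`. Hence `N(C) / N(C ∩ B)` embeds into `N(C + B) / N(B)`, while
`C / (C ∩ B) ≅ (C + B) / B`; so if `B` is strong in `A` and `C ≤ A`, then `C ∩ B` is strong in `C`.
Strength is transitive by additivity of dimension in towers, and `B₁ ∩ B₂ = (C ∩ B₁) ∩ B₂` is
strong in `C ∩ B₁`, which is strong in `C`.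
-/

section Strong

variable {K}

theorem Submodule.exists_retraction_mapsTo_inf (X Y : Submodule K M) :
    ∃ g : M →ₗ[K] M, (∀ x ∈ X, g x = x) ∧ Set.MapsTo g Y (X ⊓ Y) := by
  obtain ⟨U, hU⟩ := Submodule.exists_isCompl (X ⊓ Y)
  have hdisj : Disjoint (U ⊓ Y) X := by
    rw [disjoint_iff, inf_right_comm, inf_assoc, hU.symm.inf_eq_bot]
  have hY : (X ⊓ Y) ⊔ U ⊓ Y = Y := by
    rw [← sup_inf_assoc_of_le U inf_le_right, hU.sup_eq_top, top_inf_eq]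
  obtain ⟨W, hUW, hW⟩ := hdisj.exists_isCompl
  refine ⟨X.projection W hW.symm, fun x hx => Submodule.projection_apply_of_mem_left _ hx, ?_⟩
  intro y hy
  rw [← hY] at hy
  obtain ⟨d, hd, u, hu, rfl⟩ := Submodule.mem_sup.mp hy
  have hu0 : X.projection W hW.symm u = 0 :=
    (Submodule.projection_apply_eq_zero_iff _).mpr (hUW hu)
  rwa [map_add, hu0, add_zero, Submodule.projection_apply_of_mem_left _ hd.1]

theorem wedge2_mono {A B : Submodule K M} (h : A ≤ B) : wedge2 K A ≤ wedge2 K B :=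
  Submodule.span_mono (by rintro z ⟨a, ha, b, hb, rfl⟩; exact ⟨a, h ha, b, h hb, rfl⟩)

theorem wedge2_le_comap_map {M' : Type*} [AddCommGroup M'] [Module K M'] (g : M →ₗ[K] M')
    {A : Submodule K M} {B : Submodule K M'} (h : Set.MapsTo g A B) :
    wedge2 K A ≤ (wedge2 K B).comap (ExteriorAlgebra.map g).toLinearMap :=
  Submodule.span_le.mpr <| by
    rintro _ ⟨a, ha, b, hb, rfl⟩
    exact Submodule.subset_span ⟨g a, h ha, g b, h hb, by simp⟩

theorem wedge2_le_eqLocus_map {g : M →ₗ[K] M} {A : Submodule K M} (h : ∀ a ∈ A, g a = a) :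
    wedge2 K A ≤ LinearMap.eqLocus (ExteriorAlgebra.map g).toLinearMap LinearMap.id :=
  Submodule.span_le.mpr <| by
    rintro _ ⟨a, ha, b, hb, rfl⟩
    simp [h a ha, h b hb]

theorem wedge2_inf_wedge2_le (X Y : Submodule K M) :
    wedge2 K X ⊓ wedge2 K Y ≤ wedge2 K (X ⊓ Y) := by
  obtain ⟨g, hgX, hgY⟩ := X.exists_retraction_mapsTo_inf Y
  rintro z ⟨hzX, hzY⟩
  have hfix : ExteriorAlgebra.map g z = z := wedge2_le_eqLocus_map hgX hzX
  simpa [hfix] using wedge2_le_comap_map g hgY hzY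

theorem cdim_le_cdim_of_inf_le {P P' Q Q' : Submodule K M} (hQ : Q ≤ Q') (hP : P ≤ P')
    (h : Q ⊓ P' ≤ P) : cdim K P Q ≤ cdim K P' Q' := by
  let f := Submodule.mapQ (Submodule.comap Q.subtype P) (Submodule.comap Q'.subtype P')
    (Submodule.inclusion hQ) fun x hx => hP hx
  refine LinearMap.rank_le_of_injective f fun a b hab => ?_
  obtain ⟨a, rfl⟩ := Submodule.Quotient.mk_surjective _ a
  obtain ⟨b, rfl⟩ := Submodule.Quotient.mk_surjective _ b
  rw [Submodule.mapQ_apply, Submodule.mapQ_apply, Submodule.Quotient.eq, ← map_sub] at hab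
  exact (Submodule.Quotient.eq _).mpr (h ⟨(a - b).2, hab⟩)

theorem cdim_add_cdim {P Q R : Submodule K M} (hPQ : P ≤ Q) (hQR : Q ≤ R) :
    cdim K Q R + cdim K P Q = cdim K P R := by
  let p := Submodule.comap R.subtype P
  let q := Submodule.comap R.subtype Q
  let f : Q →ₗ[K] R ⧸ p := p.mkQ ∘ₗ Submodule.inclusion hQR
  have hker : Submodule.comap Q.subtype P = LinearMap.ker f := by
    ext x
    simp [f, p]
  have hrange : LinearMap.range f = q.map p.mkQ := by
    rw [LinearMap.range_comp, Submodule.range_inclusion]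
  have e : (Q ⧸ Submodule.comap Q.subtype P) ≃ₗ[K] q.map p.mkQ :=
    ((Submodule.quotEquivOfEq _ _ hker).trans f.quotKerEquivRange).trans (.ofEq _ _ hrange)
  have := rank_quotient_add_rank_of_divisionRing (q.map p.mkQ)
  rwa [(Submodule.quotientQuotientEquivQuotient p q fun _ hx => hPQ hx).rank_eq,
    ← e.rank_eq] at this

theorem cdim_inf_eq_cdim_sup (A B : Submodule K M) : cdim K (A ⊓ B) A = cdim K B (A ⊔ B) :=
  (LinearMap.quotientInfEquivSupQuotient A B).rank_eq

theorem finOver_iff_cdim_lt_aleph0 {P Q : Submodule K M} :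
    FinOver K P Q ↔ cdim K P Q < Cardinal.aleph0 :=
  Module.rank_lt_aleph0_iff.symm

theorem finOver_iff_of_le_of_le {P Q R : Submodule K M} (hPQ : P ≤ Q) (hQR : Q ≤ R) :
    FinOver K P R ↔ FinOver K Q R ∧ FinOver K P Q := by
  simp only [finOver_iff_cdim_lt_aleph0, ← cdim_add_cdim hPQ hQR, Cardinal.add_lt_aleph0_iff]

variable {N : Submodule K (ExteriorAlgebra K M)} {A B C : Submodule K M}

theorem Strong.inf_left (h : Strong K N B A) (hCA : C ≤ A) : Strong K N (C ⊓ B) C := by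
  refine ⟨inf_le_left, fun D hCBD hDC hfin => ?_⟩
  have hDB : D ⊓ B = C ⊓ B :=
    le_antisymm (inf_le_inf_right B hDC) (le_inf hCBD inf_le_right)
  rw [← hDB] at hfin ⊢
  have hfin' : FinOver K B (D ⊔ B) :=
    finOver_iff_cdim_lt_aleph0.mpr (cdim_inf_eq_cdim_sup D B ▸ finOver_iff_cdim_lt_aleph0.mp hfin)
  calc cdim K (N ⊓ wedge2 K (D ⊓ B)) (N ⊓ wedge2 K D)
      ≤ cdim K (N ⊓ wedge2 K B) (N ⊓ wedge2 K (D ⊔ B)) := by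
        refine cdim_le_cdim_of_inf_le (inf_le_inf_left _ (wedge2_mono le_sup_left))
          (inf_le_inf_left _ (wedge2_mono inf_le_right)) ?_
        rintro x ⟨⟨hxN, hxD⟩, -, hxB⟩
        exact ⟨hxN, wedge2_inf_wedge2_le D B ⟨hxD, hxB⟩⟩
    _ ≤ Cardinal.lift (cdim K B (D ⊔ B)) := h.2 _ le_sup_right (sup_le (hDC.trans hCA) h.1) hfin'
    _ = Cardinal.lift (cdim K (D ⊓ B) D) := by rw [cdim_inf_eq_cdim_sup]

theorem Strong.trans (hAB : Strong K N A B) (hBC : Strong K N B C) : Strong K N A C := by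
  refine ⟨hAB.1.trans hBC.1, fun E hAE hEC hfin => ?_⟩
  have hAEB : A ≤ E ⊓ B := le_inf hAE hAB.1
  obtain ⟨hfinE, hfinB⟩ := (finOver_iff_of_le_of_le hAEB inf_le_left).mp hfin
  calc cdim K (N ⊓ wedge2 K A) (N ⊓ wedge2 K E)
      = cdim K (N ⊓ wedge2 K (E ⊓ B)) (N ⊓ wedge2 K E) +
          cdim K (N ⊓ wedge2 K A) (N ⊓ wedge2 K (E ⊓ B)) :=
        (cdim_add_cdim (inf_le_inf_left _ (wedge2_mono hAEB))
          (inf_le_inf_left _ (wedge2_mono inf_le_left))).symm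
    _ ≤ Cardinal.lift (cdim K (E ⊓ B) E) + Cardinal.lift (cdim K A (E ⊓ B)) :=
        add_le_add ((hBC.inf_left hEC).2 E inf_le_left le_rfl hfinE)
          (hAB.2 _ hAEB inf_le_right hfinB)
    _ = Cardinal.lift (cdim K A E) := by rw [← Cardinal.lift_add, cdim_add_cdim hAEB inf_le_left]

theorem Strong.inf {B₁ B₂ : Submodule K M} (h₁ : Strong K N B₁ A) (h₂ : Strong K N B₂ A) :
    Strong K N (B₁ ⊓ B₂) A := by
  refine ⟨inf_le_left.trans h₁.1, fun C hC hCA hfin => ?_⟩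
  have hCB : C ⊓ B₁ ⊓ B₂ = B₁ ⊓ B₂ := by rw [inf_assoc, inf_eq_right.mpr hC]
  have h₁₂ : Strong K N (B₁ ⊓ B₂) (C ⊓ B₁) := hCB ▸ h₂.inf_left (inf_le_left.trans hCA)
  exact (h₁₂.trans (h₁.inf_left hCA)).2 C hC le_rfl hfin

end Strong

theorem statement10_general {K : Type u} [Field K] {M : Type v} [AddCommGroup M] [Module K M]
    (N : Submodule K (ExteriorAlgebra K M))
    (B₁ B₂ : Submodule K M)
    (h1 : Strong K N B₁ ⊤) (h2 : Strong K N B₂ ⊤) :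
    Strong K N (B₁ ⊓ B₂) ⊤ :=
  h1.inf h2

/-- if `B₁` and `B₂` are strong (self-sufficient) in `V`,
then so is `B₁ ⊓ B₂`. -/
theorem statement10 {K : Type u} [Field K] {M : Type v} [AddCommGroup M] [Module K M]
    (N : Submodule K (ExteriorAlgebra K M)) (hN : N ≤ wedge2 K (⊤ : Submodule K M))
    (B₁ B₂ : Submodule K M)
    (h1 : Strong K N B₁ ⊤) (h2 : Strong K N B₂ ⊤) :
    Strong K N (B₁ ⊓ B₂) ⊤ :=
  statement10_general N B₁ B₂ h1 h2

end
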